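/- Let R be a binary relation and m a 1-bounded pseudometric on the state set of a finite-state pLTS such that m(s,t) = 0 if s R t and m(s,t) = 1 otherwise. Then R is a probabilistic bisimulation if and only if m is a state-metric. -/

import Mathlib

open scoped Classical

/-- A (discrete) probability distribution over a finite set `S`. -/
structure FDist (S : Type*) [Fintype S] where
  f : S → ℝ
  nonneg : ∀ s, 0 ≤ f s
  sum_one : ∑ s, f s = 1

/-- The point distribution at `s`. -/
noncomputable def FDist.point {S : Type*} [Fintype S] (s : S) : FDist S where
  f := fun u => if u = s then 1 else 0
  nonneg := by intro u; by_cases h : u = s <;> simp [h]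
  sum_one := by simp

/-- The lifting `R†` of a relation to distributions: the smallest relation
relating point distributions of related states and closed under convex
combinations. -/
inductive Lift {S T : Type*} [Fintype S] [Fintype T] (R : S → T → Prop) :
    FDist S → FDist T → Prop
  | point {s : S} {t : T} :
      R s t → Lift R (FDist.point s) (FDist.point t)
  | convex (I : Finset ℕ) (p : ℕ → ℝ)
      (hp : ∀ i ∈ I, 0 ≤ p i) (hsum : ∑ i ∈ I, p i = 1)
      (Δs : ℕ → FDist S) (Θs : ℕ → FDist T)
      (h : ∀ i ∈ I, Lift R (Δs i) (Θs i))
      (Δ : FDist S) (Θ : FDist T)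
      (hΔ : Δ.f = ∑ i ∈ I, p i • (Δs i).f)
      (hΘ : Θ.f = ∑ i ∈ I, p i • (Θs i).f) :
      Lift R Δ Θ
/-- A probabilistic labelled transition system over a finite set of states. -/
structure PLTS (S : Type*) [Fintype S] (Act : Type*) where
  trans : S → Act → FDist S → Prop

/-- The derivatives of `s` under action `a`: `der(s,a) = {Δ | s −a→ Δ}`. -/
def der {S : Type*} [Fintype S] {Act : Type*} (L : PLTS S Act) (s : S) (a : Act) :
    Set (FDist S) :=
  { Δ | L.trans s a Δ }

/-- `R` is a probabilistic bisimulation if, whenever `s R t`, each transition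
of either state is matched by a transition of the other, with the resulting
distributions related by the lifted relation `R†`. -/
def IsBisimulation {S : Type*} [Fintype S] {Act : Type*} (L : PLTS S Act)
    (R : S → S → Prop) : Prop :=
  ∀ s t, R s t →
    (∀ a Δ, L.trans s a Δ → ∃ Θ, L.trans t a Θ ∧ Lift R Δ Θ) ∧
    (∀ a Θ, L.trans t a Θ → ∃ Δ, L.trans s a Δ ∧ Lift R Δ Θ)

/-- Probabilistic bisimilarity `∼`: the largest probabilistic bisimulation. -/
def Bisim {S : Type*} [Fintype S] {Act : Type*} (L : PLTS S Act) (s t : S) : Prop :=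
  ∃ R, IsBisimulation L R ∧ R s t

/-- A 1-bounded pseudometric on `S`: a function `m : S × S → [0,1]` with
`m s s = 0`, symmetry and the triangle inequality. -/
structure BPM (S : Type*) where
  d : S → S → ℝ
  nonneg : ∀ s t, 0 ≤ d s t
  le_one : ∀ s t, d s t ≤ 1
  refl : ∀ s, d s s = 0
  symm : ∀ s t, d s t = d t s
  triangle : ∀ s t u, d s t ≤ d s u + d u t

/-- The order on 1-bounded pseudometrics: `m₁ ⪯ m₂` iff `m₁ s t ≥ m₂ s t`
for all `s, t` (reversed pointwise order). -/
instance {S : Type*} : PartialOrder (BPM S) where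
  le m₁ m₂ := ∀ s t, m₂.d s t ≤ m₁.d s t
  le_refl m s t := le_refl _
  le_trans m₁ m₂ m₃ h₁ h₂ s t := le_trans (h₂ s t) (h₁ s t)
  le_antisymm m₁ m₂ h₁ h₂ := by
    cases m₁; cases m₂
    simp only [BPM.mk.injEq]
    funext s t
    exact le_antisymm (h₂ s t) (h₁ s t)

/-- The Kantorovich lifting `m̂` of a 1-bounded pseudometric `m` on the finite
set `S`, as the optimal value of the linear program:
maximise `∑ s, (Δ(s) − Θ(s))·x s` subject to `x s − x t ≤ m s t` and
`0 ≤ x s ≤ 1`. -/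
noncomputable def kant {S : Type*} [Fintype S] (m : S → S → ℝ)
    (Δ Θ : FDist S) : ℝ :=
  sSup { c | ∃ x : S → ℝ,
    (∀ s t, x s - x t ≤ m s t) ∧
    (∀ s, 0 ≤ x s ∧ x s ≤ 1) ∧
    c = ∑ s, (Δ.f s - Θ.f s) * x s }

/-- Supremum of a set of reals, with `sup ∅ = 0`. -/
noncomputable def hsup (A : Set ℝ) : ℝ := if A = ∅ then 0 else sSup A

/-- Infimum of a set of reals, with `inf ∅ = 1`. -/
noncomputable def hinf (A : Set ℝ) : ℝ := if A = ∅ then 1 else sInf A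

/-- The Hausdorff distance between `X, Y ⊆ Z` induced by a distance `d` on
`Z`: `H_d(X,Y) = max{ sup_{x∈X} inf_{y∈Y} d x y, sup_{y∈Y} inf_{x∈X} d y x }`,
with `inf ∅ = 1` and `sup ∅ = 0`. -/
noncomputable def hausdorff {Z : Type*} (d : Z → Z → ℝ) (X Y : Set Z) : ℝ :=
  max (hsup { v | ∃ x ∈ X, v = hinf { w | ∃ y ∈ Y, w = d x y } })
      (hsup { v | ∃ y ∈ Y, v = hinf { w | ∃ x ∈ X, w = d y x } })

/-- The function `F` on 1-bounded pseudometrics (given here by its value):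
`F(m)(s,t) = sup_{a ∈ Act} H_{m̂}(der(s,a), der(t,a))`. -/
noncomputable def Fval {S : Type*} [Fintype S] {Act : Type*} (L : PLTS S Act)
    (m : S → S → ℝ) (s t : S) : ℝ :=
  hsup { v | ∃ a : Act, v = hausdorff (kant m) (der L s a) (der L t a) }

/-- `m` is a state-metric if for all `ε ∈ [0,1)`, `m s t ≤ ε` implies that
every transition `s −a→ Δ` is matched by some `t −a→ Δ'` with
`m̂(Δ,Δ') ≤ ε`. -/
def StateMetric {S : Type*} [Fintype S] {Act : Type*} (L : PLTS S Act)
    (m : BPM S) : Prop :=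
  ∀ ε : ℝ, 0 ≤ ε → ε < 1 → ∀ s t, m.d s t ≤ ε →
    ∀ a Δ, L.trans s a Δ → ∃ Δ', L.trans t a Δ' ∧ kant m.d Δ Δ' ≤ ε

/-! The metric `m` is the discrete metric of the partition into `R`-classes, so `R` is an
equivalence and `m̂(Δ, Θ) = 0` iff `Δ` and `Θ` give every `R`-class the same mass. A test
function `x` that is monotone along `R` has no larger mean under `Δ` than under `Θ` whenever
`Δ R† Θ`, which gives `m̂(Δ, Θ) = 0` for lifted pairs. Conversely, equal class masses give the
coupling `ω(s, t) = Δ(s) Θ(t) / Θ([s])` on `R`, which exhibits `Δ R† Θ` as a convex combination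
of related point distributions. -/

section Lift

variable {S T : Type*} [Fintype S] [Fintype T]

theorem Lift.swap {R : S → T → Prop} {R' : T → S → Prop} (hR : ∀ s t, R s t → R' t s)
    {Δ : FDist S} {Θ : FDist T} (h : Lift R Δ Θ) : Lift R' Θ Δ := by
  induction h with
  | point hst => exact Lift.point (hR _ _ hst)
  | convex I p hp hsum Δs Θs _ Δ Θ hΔ hΘ ih =>
      exact Lift.convex I p hp hsum Θs Δs ih Θ Δ hΘ hΔ

theorem Lift.of_sum {ι : Type*} [Fintype ι] {R : S → T → Prop} (p : ι → ℝ)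
    (hp : ∀ i, 0 ≤ p i) (hsum : ∑ i, p i = 1) (Δs : ι → FDist S) (Θs : ι → FDist T)
    (h : ∀ i, p i ≠ 0 → Lift R (Δs i) (Θs i)) (Δ : FDist S) (Θ : FDist T)
    (hΔ : Δ.f = ∑ i, p i • (Δs i).f) (hΘ : Θ.f = ∑ i, p i • (Θs i).f) : Lift R Δ Θ := by
  have : Nonempty ι := by
    by_contra hι
    simp [not_nonempty_iff.mp hι] at hsum
  set enc : ι → ℕ := fun i => Fintype.equivFin ι i
  have henc : Function.Injective enc := Fin.val_injective.comp (Fintype.equivFin ι).injective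
  have hdec := Function.leftInverse_invFun henc
  set I := (Finset.univ.filter fun i => p i ≠ 0).image enc
  have hreindex : ∀ g : ι → ℝ, (∀ i, p i = 0 → g i = 0) →
      ∑ n ∈ I, g (Function.invFun enc n) = ∑ i, g i := by
    intro g hg
    rw [Finset.sum_image fun i _ j _ hij => henc hij]
    simp only [hdec _]
    exact Finset.sum_filter_of_ne fun i _ hgi hpi => hgi (hg i hpi)
  refine Lift.convex I (p ∘ Function.invFun enc) (fun _ _ => hp _) ?_
    (Δs ∘ Function.invFun enc) (Θs ∘ Function.invFun enc) ?_ Δ Θ ?_ ?_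
  · rw [← hsum]
    exact hreindex p fun _ => id
  · simp only [I, Finset.mem_image, Finset.mem_filter]
    rintro _ ⟨i, ⟨-, hpi⟩, rfl⟩
    simpa only [Function.comp, hdec i] using h i hpi
  all_goals
    funext u
    simp only [hΔ, hΘ, Finset.sum_apply, Pi.smul_apply, smul_eq_mul, Function.comp]
    exact (hreindex _ fun i hpi => by rw [hpi, zero_mul]).symm

theorem Lift.of_coupling {R : S → T → Prop} {Δ : FDist S} {Θ : FDist T} (ω : S → T → ℝ)
    (hω : ∀ s t, 0 ≤ ω s t) (hωR : ∀ s t, ω s t ≠ 0 → R s t)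
    (hΔ : ∀ s, ∑ t, ω s t = Δ.f s) (hΘ : ∀ t, ∑ s, ω s t = Θ.f t) : Lift R Δ Θ := by
  refine Lift.of_sum (fun q : S × T => ω q.1 q.2) (fun q => hω _ _) ?_
    (fun q => FDist.point q.1) (fun q => FDist.point q.2)
    (fun q hq => Lift.point (hωR _ _ hq)) Δ Θ ?_ ?_
  · rw [Fintype.sum_prod_type]
    simp only [hΔ, Δ.sum_one]
  · funext u
    simp [FDist.point, Finset.sum_apply, Fintype.sum_prod_type, hΔ]
  · funext u
    simp [FDist.point, Finset.sum_apply, Fintype.sum_prod_type, hΘ]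

end Lift

section Kantorovich

variable {S : Type*} [Fintype S]

theorem FDist.sum_point_mul (s : S) (x : S → ℝ) : ∑ u, (FDist.point s).f u * x u = x s := by
  simp [FDist.point]

theorem FDist.sum_mul_of_eq_sum_smul {Δ : FDist S} {I : Finset ℕ} {p : ℕ → ℝ}
    {Δs : ℕ → FDist S} (hΔ : Δ.f = ∑ i ∈ I, p i • (Δs i).f) (x : S → ℝ) :
    ∑ u, Δ.f u * x u = ∑ i ∈ I, p i * ∑ u, (Δs i).f u * x u := by
  simp only [hΔ, Finset.sum_apply, Pi.smul_apply, smul_eq_mul, Finset.sum_mul, Finset.mul_sum,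
    mul_assoc]
  exact Finset.sum_comm

theorem Lift.sum_mul_le {R : S → S → Prop} {Δ Θ : FDist S} (h : Lift R Δ Θ) {x : S → ℝ}
    (hx : ∀ s t, R s t → x s ≤ x t) : ∑ u, Δ.f u * x u ≤ ∑ u, Θ.f u * x u := by
  induction h with
  | point hst => simpa only [FDist.sum_point_mul] using hx _ _ hst
  | convex I p hp _ Δs Θs _ Δ Θ hΔ hΘ ih =>
      rw [FDist.sum_mul_of_eq_sum_smul hΔ, FDist.sum_mul_of_eq_sum_smul hΘ]
      exact Finset.sum_le_sum fun i hi => mul_le_mul_of_nonneg_left (ih i hi) (hp i hi)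

theorem FDist.sum_sub_mul_le_one (Δ Θ : FDist S) {x : S → ℝ} (hx : ∀ s, 0 ≤ x s ∧ x s ≤ 1) :
    ∑ s, (Δ.f s - Θ.f s) * x s ≤ 1 := by
  calc ∑ s, (Δ.f s - Θ.f s) * x s ≤ ∑ s, Δ.f s := by
        refine Finset.sum_le_sum fun s _ => ?_
        nlinarith [Δ.nonneg s, Θ.nonneg s, hx s]
    _ = 1 := Δ.sum_one

theorem sum_sub_mul_le_kant {m : S → S → ℝ} (Δ Θ : FDist S) {x : S → ℝ}
    (hxm : ∀ s t, x s - x t ≤ m s t) (hx : ∀ s, 0 ≤ x s ∧ x s ≤ 1) :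
    ∑ s, (Δ.f s - Θ.f s) * x s ≤ kant m Δ Θ :=
  le_csSup ⟨1, by rintro _ ⟨y, -, hy, rfl⟩; exact Δ.sum_sub_mul_le_one Θ hy⟩ ⟨x, hxm, hx, rfl⟩

theorem kant_nonpos_of_lift {R : S → S → Prop} {m : S → S → ℝ} (hm : ∀ s t, R s t → m s t = 0)
    {Δ Θ : FDist S} (h : Lift R Δ Θ) : kant m Δ Θ ≤ 0 := by
  refine Real.sSup_nonpos fun _ ⟨x, hxm, _, hc⟩ => ?_
  have hmono := h.sum_mul_le (x := x) fun s t hst => by linarith [hxm s t, hm s t hst]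
  simp only [hc, sub_mul, Finset.sum_sub_distrib]
  linarith

end Kantorovich

section ClassMass

variable {S : Type*} [Fintype S]

noncomputable def classMass (R : S → S → Prop) (Δ : FDist S) (s : S) : ℝ :=
  ∑ u, if R s u then Δ.f u else 0

variable {R : S → S → Prop}

theorem classMass_nonneg (Δ : FDist S) (s : S) : 0 ≤ classMass R Δ s :=
  Finset.sum_nonneg fun u _ => by split_ifs <;> simp [Δ.nonneg u]

theorem le_classMass (hR : Equivalence R) (Δ : FDist S) (s : S) : Δ.f s ≤ classMass R Δ s := by
  unfold classMass
  calc Δ.f s = if R s s then Δ.f s else 0 := by rw [if_pos (hR.refl s)]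
    _ ≤ _ := Finset.single_le_sum (f := fun u => if R s u then Δ.f u else 0)
        (fun u _ => by split_ifs <;> simp [Δ.nonneg u]) (Finset.mem_univ s)

theorem classMass_congr (hR : Equivalence R) (Δ : FDist S) {s t : S} (hst : R s t) :
    classMass R Δ s = classMass R Δ t :=
  Finset.sum_congr rfl fun u _ => by
    rw [if_congr ⟨hR.trans (hR.symm hst), hR.trans hst⟩ rfl rfl]

theorem sum_sub_mul_classIndicator (Δ Θ : FDist S) (s : S) :
    ∑ u, (Δ.f u - Θ.f u) * (if R s u then 1 else 0) = classMass R Δ s - classMass R Θ s := by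
  simp only [classMass, ← Finset.sum_sub_distrib]
  exact Finset.sum_congr rfl fun u _ => by split_ifs <;> ring

theorem classMass_eq_of_kant_nonpos (hR : Equivalence R) {m : S → S → ℝ}
    (hm : ∀ s t, m s t = if R s t then 0 else 1) {Δ Θ : FDist S} (hk : kant m Δ Θ ≤ 0)
    (s : S) : classMass R Δ s = classMass R Θ s := by
  have hfeasible : ∀ x : S → ℝ, (∀ u v, R u v → x u = x v) → (∀ u, 0 ≤ x u ∧ x u ≤ 1) →
      ∑ u, (Δ.f u - Θ.f u) * x u ≤ 0 := by
    refine fun x hxR hx => (sum_sub_mul_le_kant Δ Θ (fun u v => ?_) hx).trans hk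
    by_cases huv : R u v
    · simp [hm, huv, hxR u v huv]
    · rw [hm, if_neg huv]
      linarith [hx u, hx v]
  have hclass : ∀ u v, R u v → (R s u ↔ R s v) :=
    fun u v huv => ⟨fun h => hR.trans h huv, fun h => hR.trans h (hR.symm huv)⟩
  have hle := hfeasible (fun u => if R s u then 1 else 0)
    (fun u v huv => if_congr (hclass u v huv) rfl rfl) fun u => by split_ifs <;> norm_num
  have hge := hfeasible (fun u => 1 - if R s u then 1 else 0)
    (fun u v huv => by rw [if_congr (hclass u v huv) rfl rfl]) fun u => by split_ifs <;> norm_num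
  have htotal : ∑ u, (Δ.f u - Θ.f u) = 0 := by
    rw [Finset.sum_sub_distrib, Δ.sum_one, Θ.sum_one, sub_self]
  simp only [mul_sub, mul_one, Finset.sum_sub_distrib, htotal, zero_sub] at hge
  rw [sum_sub_mul_classIndicator] at hle hge
  linarith

theorem Lift.of_classMass_eq (hR : Equivalence R) {Δ Θ : FDist S}
    (h : ∀ s, classMass R Δ s = classMass R Θ s) : Lift R Δ Θ := by
  set W := classMass R Θ
  have hΔW : ∀ s, W s = 0 → Δ.f s = 0 := fun s hs =>
    le_antisymm ((le_classMass hR Δ s).trans_eq ((h s).trans hs)) (Δ.nonneg s)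
  have hΘW : ∀ s, W s = 0 → Θ.f s = 0 := fun s hs =>
    le_antisymm ((le_classMass hR Θ s).trans_eq hs) (Θ.nonneg s)
  refine Lift.of_coupling (fun s t => if R s t then Δ.f s / W s * Θ.f t else 0)
    (fun s t => ?_) (fun s t hst => ?_) (fun s => ?_) (fun t => ?_)
  · split_ifs
    · exact mul_nonneg (div_nonneg (Δ.nonneg s) (classMass_nonneg Θ s)) (Θ.nonneg t)
    · exact le_rfl
  · by_contra hnot
    exact hst (if_neg hnot)
  · calc ∑ t, (if R s t then Δ.f s / W s * Θ.f t else 0) = Δ.f s / W s * W s := by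
          simp only [W, classMass, Finset.mul_sum, mul_ite, mul_zero]
      _ = Δ.f s := div_mul_cancel_of_imp (hΔW s)
  · calc ∑ s, (if R s t then Δ.f s / W s * Θ.f t else 0)
          = classMass R Δ t * (Θ.f t / W t) := by
          simp only [classMass, Finset.sum_mul]
          refine Finset.sum_congr rfl fun s _ => ?_
          by_cases hst : R s t
          · rw [if_pos hst, if_pos (hR.symm hst), show W s = W t from classMass_congr hR Θ hst]
            ring
          · rw [if_neg hst, if_neg fun hts => hst (hR.symm hts), zero_mul]
      _ = Θ.f t := by rw [h t, mul_div_cancel_of_imp' (hΘW t)]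

end ClassMass

theorem equivalence_of_dist_eq_ite {S : Type*} {R : S → S → Prop} (m : BPM S)
    (hm : ∀ s t, m.d s t = if R s t then 0 else 1) : Equivalence R := by
  refine ⟨fun s => ?_, fun {s t} hst => ?_, fun {s t u} hst htu => ?_⟩ <;> by_contra hnot
  · have := m.refl s
    simp [hm, hnot] at this
  · have := m.symm s t
    simp [hm, hst, hnot] at this
  · have := m.triangle s u t
    norm_num [hm, hst, htu, hnot] at this

/-- Let `m` be the 1-bounded pseudometric with `m(s,t) = 0` if `s R t` and
`m(s,t) = 1` otherwise. Then `R` is a probabilistic bisimulation iff `m` is a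
state-metric. -/
theorem bisimulation_iff_stateMetric {S : Type*} [Fintype S] {Act : Type*}
    (L : PLTS S Act) (R : S → S → Prop) (m : BPM S)
    (hm : ∀ s t, m.d s t = if R s t then 0 else 1) :
    IsBisimulation L R ↔ StateMetric L m := by
  have hR : Equivalence R := equivalence_of_dist_eq_ite m hm
  have hzero : ∀ s t, R s t → m.d s t = 0 := fun s t hst => by rw [hm, if_pos hst]
  have lift_of_kant : ∀ Δ Θ, kant m.d Δ Θ ≤ 0 → Lift R Δ Θ := fun Δ Θ hk =>
    Lift.of_classMass_eq hR (classMass_eq_of_kant_nonpos hR hm hk)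
  constructor
  · intro hB ε hε0 hε1 s t hst a Δ hΔ
    have hRst : R s t := by
      by_contra hnot
      rw [hm, if_neg hnot] at hst
      linarith
    obtain ⟨Θ, hΘ, hlift⟩ := (hB s t hRst).1 a Δ hΔ
    exact ⟨Θ, hΘ, (kant_nonpos_of_lift hzero hlift).trans hε0⟩
  · refine fun hSM s t hst => ⟨fun a Δ hΔ => ?_, fun a Θ hΘ => ?_⟩
    · obtain ⟨Θ, hΘ, hk⟩ := hSM 0 le_rfl one_pos s t (hzero s t hst).le a Δ hΔ
      exact ⟨Θ, hΘ, lift_of_kant Δ Θ hk⟩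
    · obtain ⟨Δ, hΔ, hk⟩ := hSM 0 le_rfl one_pos t s (hzero t s (hR.symm hst)).le a Θ hΘ
      exact ⟨Δ, hΔ, (lift_of_kant Θ Δ hk).swap fun _ _ => hR.symm⟩
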